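/- arXiv:math/0512498 — 2 statements merged into one kernel-verified Lean document; each statement's English description precedes it below -/
import Mathlib

section
/- Let V = (V_0, V_1, V_2; f_1, f_2) be a linear 3-chain of type (r_0, r_1, r_2) with all r_j > 0 and r_0 > r_1 and r_1 ≠ r_2. If V is (0, α_1, α_2)-semistable for real numbers α_1, α_2, then (α_1, α_2) = (0, 0). -/
open Module

/-- A linear `(n+1)`-chain `V_n → V_{n-1} → ⋯ → V_0` of finite-dimensional complex
vector spaces, i.e. a representation of the linearly oriented `A_{n+1}` quiver.
Here `f i : V_{i+1} → V_i` for `i = 0, …, n-1`. -/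
structure LinChain (n : ℕ) where
  V : Fin (n + 1) → Type
  [grp : ∀ i, AddCommGroup (V i)]
  [mod : ∀ i, Module ℂ (V i)]
  [fd : ∀ i, FiniteDimensional ℂ (V i)]
  f : ∀ i : Fin n, V i.succ →ₗ[ℂ] V i.castSucc

attribute [instance] LinChain.grp LinChain.mod LinChain.fd

/-- The space of chain morphisms `Hom(C'', C')`: tuples of linear maps commuting with
the structure maps. -/
def HomChain {n : ℕ} (C' C'' : LinChain n) :
    Submodule ℂ (∀ i : Fin (n + 1), C''.V i →ₗ[ℂ] C'.V i) where
  carrier := {ψ | ∀ i : Fin n, (ψ i.castSucc).comp (C''.f i) = (C'.f i).comp (ψ i.succ)}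
  add_mem' := by
    intro a b ha hb i
    simp only [Pi.add_apply, LinearMap.add_comp, LinearMap.comp_add, ha i, hb i]
  zero_mem' := by
    intro i
    simp
  smul_mem' := by
    intro c a ha i
    simp only [Pi.smul_apply, LinearMap.smul_comp, LinearMap.comp_smul, ha i]

/-- The differential `b : F⁰ → F¹` of the 2-step complex computing `Hom` and `Ext¹`
between two linear chains. -/
def bMap {n : ℕ} (C' C'' : LinChain n) :
    (∀ i : Fin (n + 1), C''.V i →ₗ[ℂ] C'.V i) →ₗ[ℂ]
      (∀ i : Fin n, C''.V i.succ →ₗ[ℂ] C'.V i.castSucc) where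
  toFun ψ := fun i => (ψ i.castSucc).comp (C''.f i) - (C'.f i).comp (ψ i.succ)
  map_add' a b := by
    funext i
    simp only [Pi.add_apply, LinearMap.add_comp, LinearMap.comp_add]
    abel
  map_smul' c a := by
    funext i
    simp only [Pi.smul_apply, LinearMap.smul_comp, LinearMap.comp_smul, smul_sub,
      RingHom.id_apply]

/-- `Ext¹(C'', C')`, realized as the cokernel of the canonical map `b : F⁰ → F¹`
(the canonical exact sequence `0 → Hom → F⁰ → F¹ → Ext¹ → 0`). -/
abbrev Ext1Chain {n : ℕ} (C' C'' : LinChain n) :=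
  (∀ i : Fin n, C''.V i.succ →ₗ[ℂ] C'.V i.castSucc) ⧸ LinearMap.range (bMap C' C'')

/-- A subchain: subspaces preserved by the structure maps. -/
def IsSubchain {n : ℕ} (C : LinChain n) (W : ∀ i, Submodule ℂ (C.V i)) : Prop :=
  ∀ i : Fin n, (W i.succ).map (C.f i) ≤ W i.castSucc

/-- The `α`-slope of a linear chain. -/
noncomputable def chainSlope {n : ℕ} (C : LinChain n) (α : Fin (n + 1) → ℝ) : ℝ :=
  (∑ i, α i * (finrank ℂ (C.V i) : ℝ)) / (∑ i, (finrank ℂ (C.V i) : ℝ))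

/-- The `α`-slope of a subchain. -/
noncomputable def chainSubSlope {n : ℕ} (C : LinChain n) (W : ∀ i, Submodule ℂ (C.V i))
    (α : Fin (n + 1) → ℝ) : ℝ :=
  (∑ i, α i * (finrank ℂ (W i) : ℝ)) / (∑ i, (finrank ℂ (W i) : ℝ))

/-- `α`-semistability of a linear chain. -/
def IsSemistable {n : ℕ} (C : LinChain n) (α : Fin (n + 1) → ℝ) : Prop :=
  ∀ W : ∀ i, Submodule ℂ (C.V i), IsSubchain C W →
    0 < ∑ i, finrank ℂ (W i) → chainSubSlope C W α ≤ chainSlope C α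

/-- `α`-stability of a linear chain: strict inequality for nonzero proper subchains. -/
def IsStable {n : ℕ} (C : LinChain n) (α : Fin (n + 1) → ℝ) : Prop :=
  ∀ W : ∀ i, Submodule ℂ (C.V i), IsSubchain C W →
    0 < ∑ i, finrank ℂ (W i) → (∃ i, W i ≠ ⊤) → chainSubSlope C W α < chainSlope C α

/-- The indecomposable chain `δ_{[p,q]}`: `ℂ` in positions `p,…,q` with identity maps,
`0` elsewhere. (The all-ones `0/1`-sized matrix gives the identity map `ℂ → ℂ` exactly
where both adjacent spaces are nonzero, and the zero map otherwise.) -/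
noncomputable def deltaChain (n p q : ℕ) : LinChain n where
  V i := Fin (if p ≤ (i : ℕ) ∧ (i : ℕ) ≤ q then 1 else 0) → ℂ
  f i := Matrix.toLin' (Matrix.of fun _ _ => (1 : ℂ))

/-- Direct sum of a finite family of linear chains. -/
def dirSum {n : ℕ} {ι : Type} [Fintype ι] (Cs : ι → LinChain n) : LinChain n where
  V i := ∀ j, (Cs j).V i
  f i := LinearMap.pi fun j => ((Cs j).f i).comp (LinearMap.proj j)

/-- Auxiliary: build a subchain of a 3-chain from three submodules. -/
def mk3 (C : LinChain 2) (W0 : Submodule ℂ (C.V 0)) (W1 : Submodule ℂ (C.V 1))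
    (W2 : Submodule ℂ (C.V 2)) : ∀ i : Fin 3, Submodule ℂ (C.V i)
  | ⟨0, _⟩ => W0
  | ⟨1, _⟩ => W1
  | ⟨2, _⟩ => W2

lemma mk3_subchain (C : LinChain 2) (W0 : Submodule ℂ (C.V 0)) (W1 : Submodule ℂ (C.V 1))
    (W2 : Submodule ℂ (C.V 2)) (ha : W1.map (C.f 0) ≤ W0) (hb : W2.map (C.f 1) ≤ W1) :
    IsSubchain C (mk3 C W0 W1 W2) := by
  intro i
  fin_cases i
  · exact ha
  · exact hb

@[simp] lemma mk3_zero (C : LinChain 2) (W0 : Submodule ℂ (C.V 0)) (W1 : Submodule ℂ (C.V 1))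
    (W2 : Submodule ℂ (C.V 2)) : mk3 C W0 W1 W2 0 = W0 := rfl

@[simp] lemma mk3_one (C : LinChain 2) (W0 : Submodule ℂ (C.V 0)) (W1 : Submodule ℂ (C.V 1))
    (W2 : Submodule ℂ (C.V 2)) : mk3 C W0 W1 W2 1 = W1 := rfl

@[simp] lemma mk3_two (C : LinChain 2) (W0 : Submodule ℂ (C.V 0)) (W1 : Submodule ℂ (C.V 1))
    (W2 : Submodule ℂ (C.V 2)) : mk3 C W0 W1 W2 2 = W2 := rfl

lemma mk3_subSlope (C : LinChain 2) (W0 : Submodule ℂ (C.V 0)) (W1 : Submodule ℂ (C.V 1))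
    (W2 : Submodule ℂ (C.V 2)) (α1 α2 : ℝ) :
    chainSubSlope C (mk3 C W0 W1 W2) ![0, α1, α2]
      = (α1 * (finrank ℂ W1 : ℝ) + α2 * (finrank ℂ W2 : ℝ))
        / ((finrank ℂ W0 : ℝ) + (finrank ℂ W1 : ℝ) + (finrank ℂ W2 : ℝ)) := by
  unfold chainSubSlope
  rw [Fin.sum_univ_three, Fin.sum_univ_three, mk3_zero, mk3_one, mk3_two]
  simp only [Matrix.cons_val_zero, Matrix.cons_val_one, Matrix.head_cons,
    Matrix.cons_val_two, Matrix.tail_cons]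
  rw [zero_mul, zero_add]

lemma mk3_sumrank (C : LinChain 2) (W0 : Submodule ℂ (C.V 0)) (W1 : Submodule ℂ (C.V 1))
    (W2 : Submodule ℂ (C.V 2)) :
    ∑ i, finrank ℂ (mk3 C W0 W1 W2 i) = finrank ℂ W0 + finrank ℂ W1 + finrank ℂ W2 := by
  rw [Fin.sum_univ_three]; rfl

set_option maxHeartbeats 1000000 in
/-- For a linear 3-chain of type `(r_0, r_1, r_2)` with all `r_j > 0`,
`r_0 > r_1` and `r_1 ≠ r_2`: if it is `(0, α_1, α_2)`-semistable then `(α_1, α_2) = (0,0)`. -/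
theorem threeChain_param_zero (C : LinChain 2) (r0 r1 r2 : ℕ)
    (hr0 : 0 < r0) (hr1 : 0 < r1) (hr2 : 0 < r2)
    (h0 : finrank ℂ (C.V 0) = r0) (h1 : finrank ℂ (C.V 1) = r1)
    (h2 : finrank ℂ (C.V 2) = r2)
    (hgt : r1 < r0) (hne : r1 ≠ r2)
    (α1 α2 : ℝ) (hss : IsSemistable C ![0, α1, α2]) :
    α1 = 0 ∧ α2 = 0 := by
  have hR0 : (0 : ℝ) < r0 := by exact_mod_cast hr0
  have hR1 : (0 : ℝ) < r1 := by exact_mod_cast hr1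
  have hR2 : (0 : ℝ) < r2 := by exact_mod_cast hr2
  set S : ℝ := α1 * r1 + α2 * r2 with hS
  have hTpos : (0:ℝ) < (r0:ℝ) + r1 + r2 := by linarith
  have hslope : chainSlope C ![0, α1, α2] = S / ((r0:ℝ) + r1 + r2) := by
    unfold chainSlope
    rw [Fin.sum_univ_three, Fin.sum_univ_three, h0, h1, h2]
    simp only [Matrix.cons_val_zero, Matrix.cons_val_one, Matrix.head_cons,
      Matrix.cons_val_two, Matrix.tail_cons]
    rw [zero_mul, zero_add]
  -- generic application of semistability
  have key : ∀ (W0 : Submodule ℂ (C.V 0)) (W1 : Submodule ℂ (C.V 1))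
      (W2 : Submodule ℂ (C.V 2)) (d0 d1 d2 : ℕ),
      finrank ℂ W0 = d0 → finrank ℂ W1 = d1 → finrank ℂ W2 = d2 →
      W1.map (C.f 0) ≤ W0 → W2.map (C.f 1) ≤ W1 →
      0 < d0 + d1 + d2 →
      (α1 * (d1:ℝ) + α2 * (d2:ℝ)) * ((r0:ℝ) + r1 + r2)
        ≤ S * ((d0:ℝ) + (d1:ℝ) + (d2:ℝ)) := by
    intro W0 W1 W2 d0 d1 d2 e0 e1 e2 ha hb hpos
    subst e0 e1 e2
    have := hss (mk3 C W0 W1 W2) (mk3_subchain C W0 W1 W2 ha hb)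
      (by rwa [mk3_sumrank])
    rw [mk3_subSlope, hslope] at this
    have hden : (0:ℝ) < (finrank ℂ W0 : ℝ) + (finrank ℂ W1 : ℝ) + (finrank ℂ W2 : ℝ) := by
      have h' : (0:ℝ) < ((finrank ℂ W0 + finrank ℂ W1 + finrank ℂ W2 : ℕ) : ℝ) := by
        exact_mod_cast hpos
      push_cast at h'; linarith
    rw [div_le_div_iff₀ hden hTpos] at this
    exact this
  -- I1 : W = (⊤, ⊥, ⊥) gives 0 ≤ S
  have I1 : 0 ≤ S := by
    have := key ⊤ ⊥ ⊥ r0 0 0 (by rw [finrank_top]; exact h0) (finrank_bot ℂ _) (finrank_bot ℂ _)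
      (by simp) (by simp) (by omega)
    push_cast at this
    nlinarith [this, hR0]
  -- I3 : W = (range f1, ⊤, ⊤) gives S ≤ 0
  set a : ℕ := finrank ℂ (LinearMap.range (C.f 0)) with ha
  have haler1 : a ≤ r1 := by
    rw [ha, ← h1]
    exact LinearMap.finrank_range_le (C.f 0)
  have I3 : S ≤ 0 := by
    have := key (LinearMap.range (C.f 0)) ⊤ ⊤ a r1 r2 ha.symm
      (by rw [finrank_top]; exact h1) (by rw [finrank_top]; exact h2)
      (by rw [Submodule.map_top]) le_top (by omega)
    rw [← hS] at this
    have hlt : (a:ℝ) + r1 + r2 < (r0:ℝ) + r1 + r2 := by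
      have : (a:ℝ) < r0 := by exact_mod_cast lt_of_le_of_lt haler1 hgt
      linarith
    by_contra hc
    push_neg at hc
    have h2' := mul_lt_mul_of_pos_left hlt hc
    linarith
  have hS0 : S = 0 := le_antisymm I3 I1
  have hS0' : α1 * (r1:ℝ) + α2 * (r2:ℝ) = 0 := by rw [← hS]; exact hS0
  -- I2 : W = (⊤, ⊤, ⊥) gives α1 * r1 ≤ 0
  have I2 : α1 * (r1:ℝ) ≤ 0 := by
    have := key ⊤ ⊤ ⊥ r0 r1 0 (by rw [finrank_top]; exact h0)
      (by rw [finrank_top]; exact h1) (finrank_bot ℂ _) le_top (by simp) (by omega)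
    rw [hS0] at this
    push_cast at this
    by_contra hc
    push_neg at hc
    nlinarith [this, mul_pos hc hTpos]
  have hα1 : α1 ≤ 0 := by
    by_contra hc
    push_neg at hc
    nlinarith [I2, mul_pos hc hR1]
  -- I6 : W = (⊤, range f2, ⊤)
  set b : ℕ := finrank ℂ (LinearMap.range (C.f 1)) with hb
  have hbler1 : b ≤ r1 := by rw [hb, ← h1]; exact Submodule.finrank_le _
  have I6 : α1 * (b:ℝ) + α2 * (r2:ℝ) ≤ 0 := by
    have := key ⊤ (LinearMap.range (C.f 1)) ⊤ r0 b r2 (by rw [finrank_top]; exact h0)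
      hb.symm (by rw [finrank_top]; exact h2) le_top (by rw [Submodule.map_top])
      (by omega)
    rw [hS0] at this
    by_contra hc
    push_neg at hc
    nlinarith [this, mul_pos hc hTpos]
  -- case split on b vs r1
  rcases lt_or_eq_of_le hbler1 with hblt | hbeq
  · -- b < r1 : α1 (b - r1) ≤ 0 forces α1 ≥ 0
    have hbr : (b:ℝ) < r1 := by exact_mod_cast hblt
    have hα1' : 0 ≤ α1 := by
      by_contra hc
      push_neg at hc
      nlinarith [I6, hS0', mul_pos (neg_pos.mpr hc) (sub_pos.mpr hbr)]
    have hα1z : α1 = 0 := le_antisymm hα1 hα1'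
    refine ⟨hα1z, ?_⟩
    have hz : α2 * (r2:ℝ) = 0 := by rw [hα1z, zero_mul, zero_add] at hS0'; exact hS0'
    rcases mul_eq_zero.mp hz with h | h
    · exact h
    · exact absurd h (ne_of_gt hR2)
  · -- b = r1 : then b < r2, use ker f2
    have hbr2 : b ≤ r2 := by
      rw [hb, ← h2]; exact LinearMap.finrank_range_le (C.f 1)
    have hblt2 : b < r2 := lt_of_le_of_ne hbr2 (hbeq ▸ hne)
    set k : ℕ := finrank ℂ (LinearMap.ker (C.f 1)) with hk
    have hrn : b + k = r2 := by
      rw [hb, hk, ← h2]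
      exact LinearMap.finrank_range_add_finrank_ker (C.f 1)
    have hker : 0 < k := by omega
    have I5 : α2 ≤ 0 := by
      have := key ⊥ ⊥ (LinearMap.ker (C.f 1)) 0 0 k (finrank_bot ℂ _) (finrank_bot ℂ _) hk.symm
        (by simp)
        (by rw [Submodule.map_le_iff_le_comap]; exact le_of_eq rfl)
        (by omega)
      rw [hS0] at this
      push_cast at this
      have hkR : (0:ℝ) < k := by exact_mod_cast hker
      by_contra hc
      push_neg at hc
      nlinarith [this, mul_pos (mul_pos hc hkR) hTpos]
    have hα1' : 0 ≤ α1 := by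
      by_contra hc
      push_neg at hc
      nlinarith [hS0', mul_nonneg (neg_nonneg.mpr I5) hR2.le,
        mul_neg_of_neg_of_pos hc hR1]
    have hα1z : α1 = 0 := le_antisymm hα1 hα1'
    refine ⟨hα1z, ?_⟩
    have hz : α2 * (r2:ℝ) = 0 := by rw [hα1z, zero_mul, zero_add] at hS0'; exact hS0'
    rcases mul_eq_zero.mp hz with h | h
    · exact h
    · exact absurd h (ne_of_gt hR2)
end

section
/- Let V = (V_0, V_1, V_2; f_1, f_2) be a linear 3-chain of type (r_0, r_1, r_2) with all r_j > 0, r_0 ≠ r_1 and r_1 = r_2. If V is (0, α_1, α_2)-semistable with (α_1, α_2) ≠ (0,0), then f_2 : V_2 → V_1 is an isomorphism and (α_1, α_2) = λ·(−1, 1) for some λ > 0. Conversely, if f_2 is an isomorphism then V is (0, −1, 1)-semistable. -/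
open Module

private def mkW (C : LinChain 2) (W0 : Submodule ℂ (C.V 0)) (W1 : Submodule ℂ (C.V 1))
    (W2 : Submodule ℂ (C.V 2)) : ∀ i : Fin 3, Submodule ℂ (C.V i)
  | ⟨0, _⟩ => W0
  | ⟨1, _⟩ => W1
  | ⟨2, _⟩ => W2

private lemma mkW_subchain (C : LinChain 2) {W0 : Submodule ℂ (C.V 0)} {W1 : Submodule ℂ (C.V 1)}
    {W2 : Submodule ℂ (C.V 2)} (h01 : W1.map (C.f 0) ≤ W0) (h12 : W2.map (C.f 1) ≤ W1) :
    IsSubchain C (mkW C W0 W1 W2) := by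
  intro i
  fin_cases i
  · exact h01
  · exact h12


set_option maxHeartbeats 1000000 in
/-- For a linear 3-chain of type `(r_0, r_1, r_2)` with all `r_j > 0`,
`r_0 ≠ r_1` and `r_1 = r_2`: if it is `(0, α_1, α_2)`-semistable with `(α_1,α_2) ≠ (0,0)`,
then `f_2` is an isomorphism and `(α_1, α_2) = λ·(−1,1)` for some `λ > 0`; conversely,
if `f_2` is an isomorphism then the chain is `(0,−1,1)`-semistable. -/
theorem threeChain_param_line (C : LinChain 2) (r0 r1 : ℕ)
    (hr0 : 0 < r0) (hr1 : 0 < r1) (hne : r0 ≠ r1)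
    (h0 : finrank ℂ (C.V 0) = r0) (h1 : finrank ℂ (C.V 1) = r1)
    (h2 : finrank ℂ (C.V 2) = r1) :
    (∀ α1 α2 : ℝ, IsSemistable C ![0, α1, α2] → ¬ (α1 = 0 ∧ α2 = 0) →
      Function.Bijective (C.f 1) ∧ ∃ l : ℝ, 0 < l ∧ α1 = l * (-1) ∧ α2 = l * 1) ∧
    (Function.Bijective (C.f 1) → IsSemistable C ![0, -1, 1]) := by
  constructor
  ·
    have hR0 : (0:ℝ) < r0 := by exact_mod_cast hr0
    have hR1 : (0:ℝ) < r1 := by exact_mod_cast hr1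
    have hn : (0:ℝ) < (r0:ℝ) + 2*r1 := by linarith
    intro a b hss hab
    have key : ∀ (W0 : Submodule ℂ (C.V 0)) (W1 : Submodule ℂ (C.V 1)) (W2 : Submodule ℂ (C.V 2)),
          W1.map (C.f 0) ≤ W0 → W2.map (C.f 1) ≤ W1 →
          0 < finrank ℂ W0 + finrank ℂ W1 + finrank ℂ W2 →
          (a * (finrank ℂ W1 : ℝ) + b * (finrank ℂ W2 : ℝ)) * ((r0:ℝ) + 2*r1)
            ≤ (a + b) * (r1:ℝ) * ((finrank ℂ W0 : ℝ) + (finrank ℂ W1 : ℝ) + (finrank ℂ W2 : ℝ)) := by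
      intro W0 W1 W2 h01 h12 hpos
      have h := hss (mkW C W0 W1 W2) (mkW_subchain C h01 h12)
        (by rw [Fin.sum_univ_three]; exact hpos)
      unfold chainSubSlope chainSlope at h
      rw [Fin.sum_univ_three, Fin.sum_univ_three, Fin.sum_univ_three, Fin.sum_univ_three] at h
      have m0 : mkW C W0 W1 W2 0 = W0 := rfl
      have m1 : mkW C W0 W1 W2 1 = W1 := rfl
      have m2 : mkW C W0 W1 W2 2 = W2 := rfl
      have e0 : (![(0:ℝ), a, b]) 0 = 0 := rfl
      have e1 : (![(0:ℝ), a, b]) 1 = a := rfl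
      have e2 : (![(0:ℝ), a, b]) 2 = b := rfl
      rw [m0, m1, m2, e0, e1, e2, h0, h1, h2] at h
      have hposR : (0:ℝ) < (finrank ℂ W0 : ℝ) + finrank ℂ W1 + finrank ℂ W2 := by exact_mod_cast hpos
      rw [div_le_div_iff₀ hposR (by linarith)] at h
      nlinarith [h]
    -- named submodules (with types normalized)
    let Rf0 : Submodule ℂ (C.V 0) := LinearMap.range (C.f 0)
    let Kf0 : Submodule ℂ (C.V 1) := LinearMap.ker (C.f 0)
    let Rf1 : Submodule ℂ (C.V 1) := LinearMap.range (C.f 1)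
    let Kf1 : Submodule ℂ (C.V 2) := LinearMap.ker (C.f 1)
    let RfC : Submodule ℂ (C.V 0) := LinearMap.range ((C.f 0).comp (C.f 1))
    let KfC : Submodule ℂ (C.V 2) := LinearMap.ker ((C.f 0).comp (C.f 1))
    -- finrank of top submodules
    have ht0 : finrank ℂ (⊤ : Submodule ℂ (C.V 0)) = r0 := by rw [finrank_top]; exact h0
    have ht1 : finrank ℂ (⊤ : Submodule ℂ (C.V 1)) = r1 := by rw [finrank_top]; exact h1
    have ht2 : finrank ℂ (⊤ : Submodule ℂ (C.V 2)) = r1 := by rw [finrank_top]; exact h2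
    -- rank-nullity facts
    have rn0 : finrank ℂ Rf0 + finrank ℂ Kf0 = r1 :=
      (LinearMap.finrank_range_add_finrank_ker (C.f 0)).trans h1
    have rn1 : finrank ℂ Rf1 + finrank ℂ Kf1 = r1 :=
      (LinearMap.finrank_range_add_finrank_ker (C.f 1)).trans h2
    have rn2 : finrank ℂ RfC + finrank ℂ KfC = r1 :=
      (LinearMap.finrank_range_add_finrank_ker ((C.f 0).comp (C.f 1))).trans h2
    have hD0le : finrank ℂ Rf0 ≤ r0 := h0 ▸ Submodule.finrank_le Rf0
    -- instance I1 : (⊤, ⊥, ⊥)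
    have I1 := key ⊤ ⊥ ⊥ le_top (by simp) (by simp only [ht0, finrank_bot]; omega)
    rw [ht0] at I1
    simp only [finrank_bot] at I1
    push_cast at I1
    have habnn : 0 ≤ a + b := by nlinarith [I1, mul_pos hR1 hR0]
    -- instance I2 : (⊤, ⊤, ⊥)
    have I2 := key ⊤ ⊤ ⊥ le_top (by simp) (by simp only [ht0, ht1, finrank_bot]; omega)
    rw [ht0, ht1] at I2
    simp only [finrank_bot] at I2
    push_cast at I2
    have p2 : a * ((r0:ℝ) + 2*r1) ≤ (a + b) * ((r0:ℝ) + r1) := by nlinarith [I2, hR1]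
    -- surjectivity of f 0 given 0 < a + b
    have surj : 0 < a + b → finrank ℂ Rf0 = r0 ∧ r0 < r1 := by
      intro hs
      have Iim := key Rf0 ⊤ ⊤ (Submodule.map_top _).le le_top
        (by simp only [ht1, ht2]; omega)
      rw [ht1, ht2] at Iim
      have hle : (r0:ℝ) ≤ finrank ℂ Rf0 := by
        nlinarith [Iim, mul_pos hs hR1]
      have hle' : r0 ≤ finrank ℂ Rf0 := by exact_mod_cast hle
      have hd : finrank ℂ Rf0 = r0 := le_antisymm hD0le hle'
      exact ⟨hd, lt_of_le_of_ne (by omega) hne⟩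
    -- f 1 is injective
    have hker0 : finrank ℂ Kf1 = 0 := by
      by_contra hK
      have hKpos : (0:ℝ) < (finrank ℂ Kf1 : ℝ) := by exact_mod_cast Nat.pos_of_ne_zero hK
      have I4 := key ⊥ ⊥ Kf1 (by simp) ((Submodule.map_le_iff_le_comap).2 le_rfl)
        (by simp only [finrank_bot]; omega)
      simp only [finrank_bot] at I4
      push_cast at I4
      have p4 : b * ((r0:ℝ) + 2*r1) ≤ (a + b) * r1 := by nlinarith [I4, hKpos]
      have heq : a * (r1:ℝ) = b * ((r0:ℝ) + r1) := by nlinarith [p2, p4]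
      have hbne : b ≠ 0 := by
        intro hb0
        apply hab
        refine ⟨?_, hb0⟩
        rw [hb0] at heq
        nlinarith [heq, hR1]
      have hbpos : 0 < b := by
        rcases lt_or_gt_of_ne hbne with hblt | hbgt
        · exfalso
          have ha' : a * (r1:ℝ) < 0 := by nlinarith [heq, hblt, hR0, hR1]
          nlinarith [ha', hR1, habnn, hblt]
        · exact hbgt
      have hsum : 0 < a + b := by nlinarith [heq, hbpos, hR0, hR1]
      obtain ⟨hd0, hr01⟩ := surj hsum
      have hEpos : 0 < finrank ℂ Kf0 := by omega
      have Ik := key ⊥ Kf0 KfC ((Submodule.map_le_iff_le_comap).2 le_rfl)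
        ((Submodule.map_le_iff_le_comap).2 (LinearMap.ker_comp _ _).le)
        (by simp only [finrank_bot]; omega)
      simp only [finrank_bot] at Ik
      push_cast at Ik
      have hEr : (0:ℝ) < (finrank ℂ Kf0 : ℝ) := by exact_mod_cast hEpos
      have hK2r : (0:ℝ) ≤ (finrank ℂ KfC : ℝ) := Nat.cast_nonneg _
      have h' := mul_le_mul_of_nonneg_right Ik hR1.le
      have e1 : a*(r1:ℝ)*((finrank ℂ Kf0 : ℝ)*((r0:ℝ)+2*r1))
          = b*((r0:ℝ)+r1)*((finrank ℂ Kf0 : ℝ)*((r0:ℝ)+2*r1)) := by rw [heq]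
      have e2 : a*(r1:ℝ)*((finrank ℂ Kf0 : ℝ)*(r1:ℝ))
          = b*((r0:ℝ)+r1)*((finrank ℂ Kf0 : ℝ)*(r1:ℝ)) := by rw [heq]
      have e3 : a*(r1:ℝ)*((finrank ℂ KfC : ℝ)*(r1:ℝ))
          = b*((r0:ℝ)+r1)*((finrank ℂ KfC : ℝ)*(r1:ℝ)) := by rw [heq]
      have hpos4 : 0 < b*((r0:ℝ)*((finrank ℂ Kf0 : ℝ)*((r0:ℝ)+2*r1))) :=
        mul_pos hbpos (mul_pos hR0 (mul_pos hEr hn))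
      nlinarith [h', e1, e2, e3, hpos4]
    -- bijectivity
    have hrange1 : LinearMap.range (C.f 1) = ⊤ := by
      apply Submodule.eq_top_of_finrank_eq
      have hr : finrank ℂ Rf1 = r1 := by omega
      exact hr.trans h1.symm
    have hinj : Function.Injective (C.f 1) :=
      LinearMap.ker_eq_bot.mp (Submodule.finrank_eq_zero.mp hker0)
    have hbij : Function.Bijective (C.f 1) := ⟨hinj, LinearMap.range_eq_top.mp hrange1⟩
    refine ⟨hbij, ?_⟩
    -- a + b ≤ 0
    have habneg : a + b ≤ 0 := by
      by_contra hcon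
      push_neg at hcon
      obtain ⟨hd0, hr01⟩ := surj hcon
      have hE : finrank ℂ Kf0 = r1 - r0 := by omega
      have hM : finrank ℂ RfC = r0 := by
        show finrank ℂ (LinearMap.range ((C.f 0).comp (C.f 1))) = r0
        rw [LinearMap.range_comp, hrange1, Submodule.map_top]
        exact hd0
      have hK2 : finrank ℂ KfC = r1 - r0 := by omega
      have Ik := key ⊥ Kf0 KfC ((Submodule.map_le_iff_le_comap).2 le_rfl)
        ((Submodule.map_le_iff_le_comap).2 (LinearMap.ker_comp _ _).le)
        (by simp only [finrank_bot]; omega)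
      simp only [finrank_bot] at Ik
      rw [hE, hK2, Nat.cast_sub hr01.le] at Ik
      push_cast at Ik
      have hEr : (0:ℝ) < (r1:ℝ) - r0 := by
        have : (r0:ℝ) < r1 := by exact_mod_cast hr01
        linarith
      have hint : 0 < (a + b) * (((r1:ℝ) - r0) * (r0:ℝ)) :=
        mul_pos hcon (mul_pos hEr hR0)
      nlinarith [Ik, hint]
    have hab0 : a + b = 0 := le_antisymm habneg habnn
    have haneg : a ≤ 0 := by nlinarith [p2, hab0, hn]
    have hane : a ≠ 0 := by
      intro ha0
      exact hab ⟨ha0, by linarith⟩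
    have hapos : a < 0 := lt_of_le_of_ne haneg hane
    exact ⟨-a, by linarith, by ring, by linarith⟩
  ·
    intro hbij W hsub hpos2
    have hle : finrank ℂ (W 2) ≤ finrank ℂ (W 1) := by
      have h := hsub 1
      have he : finrank ℂ (W 2) = finrank ℂ ((W 2).map (C.f 1)) :=
        (Submodule.equivMapOfInjective _ hbij.1 _).finrank_eq
      rw [he]
      exact Submodule.finrank_mono h
    unfold chainSubSlope chainSlope
    rw [Fin.sum_univ_three, Fin.sum_univ_three, Fin.sum_univ_three, Fin.sum_univ_three]
    have e0 : (![(0:ℝ), -1, 1]) 0 = 0 := rfl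
    have e1 : (![(0:ℝ), -1, 1]) 1 = -1 := rfl
    have e2 : (![(0:ℝ), -1, 1]) 2 = 1 := rfl
    rw [e0, e1, e2, h0, h1, h2]
    have hden : (0:ℝ) < (finrank ℂ (W 0) : ℝ) + finrank ℂ (W 1) + finrank ℂ (W 2) := by
      rw [Fin.sum_univ_three] at hpos2
      exact_mod_cast hpos2
    have hW : (finrank ℂ (W 2) : ℝ) ≤ finrank ℂ (W 1) := by exact_mod_cast hle
    have hz : ((0:ℝ) * r0 + (-1) * r1 + 1 * r1) = 0 := by ring
    rw [hz, zero_div]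
    apply div_nonpos_of_nonpos_of_nonneg
    · linarith
    · linarith
end
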